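/- arXiv:1502.06411 — 3 statements merged into one kernel-verified Lean document; each statement's English description precedes it below -/
import Mathlib

section
/- Let Φ: H_2 → H_2 be a qubit quantum channel and let α ≥ 0. Then the minimum output Rényi α-entropy of Φ satisfies S_{min,α}(Φ) = h_{2,α}(f(‖Φ‖_{1→2})), where f(x) = (1 + √(2x² − 1))/2 and h_{2,α}(x) = (1/(1−α)) log(x^α + (1−x)^α) is the binary Rényi α-entropy (with h_{2,1}(x) = −x log x − (1−x) log(1−x)). -/
/-!
A qubit state with eigenvalues `t, 1 - t` has Rényi entropy `h_{2,α}(t)` and 2-norm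
`√(t² + (1 - t)²)`, from which `f` recovers `max t (1 - t)`. As `h_{2,α}` is symmetric about
`1/2` and, for `α ≥ 0`, continuous and decreasing on `[1/2, 1]`, the output entropy
`S_α(Φ ρ)` is a continuous decreasing function of `‖Φ ρ‖₂`; so its infimum over states is
that function evaluated at the supremum of the output 2-norms, which is `‖Φ‖_{1→2}`.
-/

open scoped Matrix Kronecker BigOperators Classical ComplexOrder
open Filter

noncomputable section

variable {ι κ μ : Type*} [Fintype ι] [DecidableEq ι] [Fintype κ] [DecidableEq κ]
  [Fintype μ] [DecidableEq μ]

/-- A density matrix: positive semidefinite with trace 1. -/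
def IsDensity (ρ : Matrix ι ι ℂ) : Prop := ρ.PosSemidef ∧ ρ.trace = 1

/-- Trace-preserving map. -/
def IsTracePreserving (Φ : Matrix ι ι ℂ → Matrix κ κ ℂ) : Prop :=
  ∀ ρ, (Φ ρ).trace = ρ.trace

/-- Hermitian-preserving map (a real-linear map between the spaces of Hermitian matrices). -/
def IsHermitianPreserving (Φ : Matrix ι ι ℂ → Matrix κ κ ℂ) : Prop :=
  ∀ ρ, ρ.IsHermitian → (Φ ρ).IsHermitian

/-- Unital: `Φ (I/n) = I/k`. -/
def IsUnital (Φ : Matrix ι ι ℂ → Matrix κ κ ℂ) : Prop :=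
  Φ (((Fintype.card ι : ℂ))⁻¹ • 1) = ((Fintype.card κ : ℂ))⁻¹ • 1

/-- The ampliation `Φ ⊗ id` of a map on matrices. -/
def ampl (Φ : Matrix ι ι ℂ → Matrix κ κ ℂ) (ρ : Matrix (ι × μ) (ι × μ) ℂ) :
    Matrix (κ × μ) (κ × μ) ℂ :=
  Matrix.of fun p q => Φ (Matrix.of fun i j => ρ (i, p.2) (j, q.2)) p.1 q.1

/-- Completely positive map: every ampliation sends PSD matrices to PSD matrices. -/
def IsCompletelyPositive (Φ : Matrix ι ι ℂ → Matrix κ κ ℂ) : Prop :=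
  ∀ (m : ℕ) (ρ : Matrix (ι × Fin m) (ι × Fin m) ℂ), ρ.PosSemidef →
    (ampl (μ := Fin m) Φ ρ).PosSemidef

/-- Partial trace over the first tensor factor. -/
def ptraceFst (ρ : Matrix (ι × μ) (ι × μ) ℂ) : Matrix μ μ ℂ :=
  Matrix.of fun a b => ∑ i, ρ (i, a) (i, b)

/-- Rényi α-entropy of a (Hermitian) matrix, via its eigenvalues; α = 1 is von Neumann. -/
def renyiEntropy (α : ℝ) (ρ : Matrix ι ι ℂ) : ℝ :=
  if h : ρ.IsHermitian then
    if α = 1 then -∑ i, h.eigenvalues i * Real.log (h.eigenvalues i)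
    else (1 - α)⁻¹ * Real.log (∑ i, h.eigenvalues i ^ α)
  else 0

/-- Minimum output Rényi α-entropy of a map. -/
def Smin (α : ℝ) (Φ : Matrix ι ι ℂ → Matrix κ κ ℂ) : ℝ :=
  sInf {x | ∃ ρ, IsDensity ρ ∧ x = renyiEntropy α (Φ ρ)}

/-- The `1 → 2` norm: maximum over density matrices of `√(Tr (Φ ρ)²)`. -/
def norm12 (Φ : Matrix ι ι ℂ → Matrix κ κ ℂ) : ℝ :=
  sSup {x | ∃ ρ, IsDensity ρ ∧ x = Real.sqrt ((Φ ρ * Φ ρ).trace.re)}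

/-- The matrix `A_Φ` with respect to an orthonormal family `M` of traceless Hermitian matrices. -/
def APhi {N : ℕ} (Φ : Matrix ι ι ℂ → Matrix κ κ ℂ) (M : Fin N → Matrix ι ι ℂ) :
    Matrix (Fin N) (Fin N) ℝ :=
  Matrix.of fun i j => ((Φ (M i) * Φ (M j)).trace).re

/-- Operator (ℓ²→ℓ²) norm of a real square matrix. -/
def opNorm {N : ℕ} (A : Matrix (Fin N) (Fin N) ℝ) : ℝ :=
  ‖Matrix.toEuclideanCLM (𝕜 := ℝ) A‖

/-- `γ(Φ)` as a function of the dimensions and of `‖A_Φ‖∞`. -/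
def gammaPhi (n k : ℕ) (a : ℝ) : ℝ :=
  if (k : ℝ) * a ≤ (n : ℝ) then 1 / k + (1 - 1 / n) * a else a

/-- The function `f(x) = (1 + √(2x² − 1))/2`. -/
def fBloch (x : ℝ) : ℝ := (1 + Real.sqrt (2 * x ^ 2 - 1)) / 2

/-- Binary Rényi α-entropy. -/
def h2 (α x : ℝ) : ℝ :=
  if α = 1 then -(x * Real.log x) - (1 - x) * Real.log (1 - x)
  else (1 - α)⁻¹ * Real.log (x ^ α + (1 - x) ^ α)

/-- Rényi α-entropy of a probability vector. -/
def HAlpha {n : ℕ} (α : ℝ) (p : Fin n → ℝ) : ℝ :=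
  if α = 1 then -∑ j, p j * Real.log (p j)
  else (1 - α)⁻¹ * Real.log (∑ j, p j ^ α)

/-- The function `g_α(c)` of the paper. -/
def gA (α c : ℝ) : ℝ :=
  if α = 1 then
    Real.log (⌊1 / c⌋₊ + 1) - (1 / (1 + (⌊1 / c⌋₊ : ℝ))) *
      ((⌊1 / c⌋₊ : ℝ) * (1 + Real.sqrt (c - (1 - c) / ⌊1 / c⌋₊)) *
          Real.log (1 + Real.sqrt (c - (1 - c) / ⌊1 / c⌋₊)) +
        (1 - (⌊1 / c⌋₊ : ℝ) * Real.sqrt (c - (1 - c) / ⌊1 / c⌋₊)) *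
          Real.log (1 - (⌊1 / c⌋₊ : ℝ) * Real.sqrt (c - (1 - c) / ⌊1 / c⌋₊)))
  else
    (1 - α)⁻¹ * Real.log ((⌊1 / c⌋₊ : ℝ) *
        ((1 + Real.sqrt (c - (1 - c) / ⌊1 / c⌋₊)) / (1 + (⌊1 / c⌋₊ : ℝ))) ^ α +
      ((1 - (⌊1 / c⌋₊ : ℝ) * Real.sqrt (c - (1 - c) / ⌊1 / c⌋₊)) / (1 + (⌊1 / c⌋₊ : ℝ))) ^ α)

/-- The `N`-fold tensor power of a map on matrices. -/
def tpow {n k : ℕ} (Φ : Matrix (Fin n) (Fin n) ℂ → Matrix (Fin k) (Fin k) ℂ) (N : ℕ)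
    (ρ : Matrix (Fin N → Fin n) (Fin N → Fin n) ℂ) :
    Matrix (Fin N → Fin k) (Fin N → Fin k) ℂ :=
  Matrix.of fun f g => ∑ u : Fin N → Fin n, ∑ v : Fin N → Fin n,
    ρ u v * ∏ i, Φ (Matrix.single (u i) (v i) 1) (f i) (g i)

/-- The Holevo quantity `χ(Φ)`. -/
def holevoChi (Φ : Matrix ι ι ℂ → Matrix κ κ ℂ) : ℝ :=
  sSup {x | ∃ (J : ℕ) (p : Fin J → ℝ) (ρ : Fin J → Matrix ι ι ℂ),
    (∀ j, 0 ≤ p j) ∧ (∑ j, p j = 1) ∧ (∀ j, IsDensity (ρ j)) ∧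
    x = renyiEntropy 1 (∑ j, (p j : ℂ) • Φ (ρ j)) -
      ∑ j, p j * renyiEntropy 1 (Φ (ρ j))}

/-- Schatten p-norm of a complex matrix (via the eigenvalues of `ρᴴρ`). -/
def schattenNorm (p : ℝ) (ρ : Matrix ι ι ℂ) : ℝ :=
  (∑ i, (Matrix.posSemidef_conjTranspose_mul_self ρ).1.eigenvalues i ^ (p / 2)) ^ (1 / p)

/-- The `p → 2` norm of a super operator on complex matrix spaces. -/
def superNorm (p : ℝ) (Φ : Matrix ι ι ℂ → Matrix κ κ ℂ) : ℝ :=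
  sSup {x | ∃ ρ : Matrix ι ι ℂ, ρ ≠ 0 ∧ x = schattenNorm 2 (Φ ρ) / schattenNorm p ρ}

/-- The cyclic-shift unitary `U|m⟩ = |m+1⟩`. -/
def shiftU (n : ℕ) [NeZero n] : Matrix (ZMod n) (ZMod n) ℂ :=
  Matrix.of fun i j => if i = j + 1 then 1 else 0

/-- The phase unitary `V|m⟩ = e^{2πim/n}|m⟩`. -/
def diagV (n : ℕ) [NeZero n] : Matrix (ZMod n) (ZMod n) ℂ :=
  Matrix.diagonal fun m => Complex.exp (2 * Real.pi * Complex.I * (m.val : ℂ) / n)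

/-- Discrete Weyl operators `W_{x,y} = UˣVʸ`. -/
def Wmat (n : ℕ) [NeZero n] (x y : ZMod n) : Matrix (ZMod n) (ZMod n) ℂ :=
  shiftU n ^ x.val * diagV n ^ y.val

/-- The index set `S_n`. -/
def weylS (n : ℕ) [NeZero n] : Set (ZMod n × ZMod n) :=
  {p | (1 ≤ p.1.val ∧ p.1.val < p.2.val) ∨
       (p.1 = p.2 ∧ 1 ≤ p.1.val ∧ p.1.val ≤ n / 2) ∨
       (p.1 = 0 ∧ 1 ≤ p.2.val ∧ p.2.val ≤ n / 2) ∨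
       (p.2 = 0 ∧ 1 ≤ p.1.val ∧ p.1.val ≤ n / 2)}

/-- `S_n^F = S_n ∩ {(n/2,n/2), (0,n/2), (n/2,0)}` (empty for odd `n`). -/
def weylSF (n : ℕ) [NeZero n] : Set (ZMod n × ZMod n) :=
  {p | p ∈ weylS n ∧ 2 * p.1 = 0 ∧ 2 * p.2 = 0}

/-- `S_n^{GH} = S_n \ S_n^F`. -/
def weylSGH (n : ℕ) [NeZero n] : Set (ZMod n × ZMod n) := weylS n \ weylSF n

/-- `F_{x,y} = W_{x,y}/√n`. -/
def Fmat (n : ℕ) [NeZero n] (p : ZMod n × ZMod n) : Matrix (ZMod n) (ZMod n) ℂ :=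
  ((Real.sqrt n : ℂ))⁻¹ • Wmat n p.1 p.2

/-- `G_{x,y} = (W_{x,y} + W_{x,y}^*)/√(2n)`. -/
def Gmat (n : ℕ) [NeZero n] (p : ZMod n × ZMod n) : Matrix (ZMod n) (ZMod n) ℂ :=
  ((Real.sqrt (2 * n) : ℂ))⁻¹ • (Wmat n p.1 p.2 + (Wmat n p.1 p.2)ᴴ)

/-- `H_{x,y} = (W_{x,y} − W_{x,y}^*)/(√(2n)·i)`. -/
def Hmat (n : ℕ) [NeZero n] (p : ZMod n × ZMod n) : Matrix (ZMod n) (ZMod n) ℂ :=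
  (((Real.sqrt (2 * n) : ℂ)) * Complex.I)⁻¹ • (Wmat n p.1 p.2 - (Wmat n p.1 p.2)ᴴ)

open Set

section BinaryRenyi

variable {α : ℝ}

theorem h2_one_sub (α x : ℝ) : h2 α (1 - x) = h2 α x := by
  unfold h2
  split_ifs
  · ring_nf
  · rw [sub_sub_cancel, add_comm]

theorem h2_of_ne_one (hα : α ≠ 1) :
    h2 α = fun x => (1 - α)⁻¹ * Real.log (x ^ α + (1 - x) ^ α) := by
  funext x
  simp only [h2, if_neg hα]

theorem h2_one : h2 1 = fun x => -(x * Real.log x) - (1 - x) * Real.log (1 - x) := by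
  funext x
  simp [h2]

theorem rpow_add_one_sub_rpow_pos (α : ℝ) {t : ℝ} (ht : t ∈ Icc (0 : ℝ) 1) :
    0 < t ^ α + (1 - t) ^ α := by
  rcases le_total t (1 / 2) with ht2 | ht2
  · exact add_pos_of_nonneg_of_pos (Real.rpow_nonneg ht.1 α)
      (Real.rpow_pos_of_pos (by linarith) α)
  · exact add_pos_of_pos_of_nonneg (Real.rpow_pos_of_pos (by linarith) α)
      (Real.rpow_nonneg (by linarith [ht.2]) α)

theorem continuousOn_h2 (hα : 0 ≤ α) : ContinuousOn (h2 α) (Icc 0 1) := by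
  rcases eq_or_ne α 1 with rfl | hα1
  · rw [h2_one]
    exact (Real.continuous_mul_log.neg.sub
      (Real.continuous_mul_log.comp (continuous_const.sub continuous_id))).continuousOn
  rw [h2_of_ne_one hα1]
  refine continuousOn_const.mul (ContinuousOn.log ?_ fun x hx =>
    (rpow_add_one_sub_rpow_pos α hx).ne')
  exact (continuousOn_id.rpow_const fun _ _ => Or.inr hα).add
    ((continuousOn_const.sub continuousOn_id).rpow_const fun _ _ => Or.inr hα)

theorem hasDerivAt_h2_one {t : ℝ} (ht : t ∈ Ioo (0 : ℝ) 1) :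
    HasDerivAt (h2 1) (Real.log (1 - t) - Real.log t) t := by
  have hlog := Real.hasDerivAt_mul_log ht.1.ne'
  have hlog' := (Real.hasDerivAt_mul_log (sub_pos.2 ht.2).ne').comp t
    ((hasDerivAt_id t).const_sub 1)
  rw [h2_one]
  exact (hlog.neg.sub hlog').congr_deriv (by ring)

theorem hasDerivAt_h2_of_ne_one (hα : α ≠ 1) {t : ℝ} (ht : t ∈ Ioo (0 : ℝ) 1) :
    HasDerivAt (h2 α)
      (α * ((1 - α)⁻¹ * (t ^ (α - 1) - (1 - t) ^ (α - 1))) / (t ^ α + (1 - t) ^ α)) t := by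
  have hpow := Real.hasDerivAt_rpow_const (p := α) (Or.inl ht.1.ne')
  have hpow' := (Real.hasDerivAt_rpow_const (p := α) (Or.inl (sub_pos.2 ht.2).ne')).comp t
    ((hasDerivAt_id t).const_sub 1)
  have hsum_ne : t ^ α + (1 - t) ^ α ≠ 0 :=
    (rpow_add_one_sub_rpow_pos α (Ioo_subset_Icc_self ht)).ne'
  rw [h2_of_ne_one hα]
  exact (((hpow.add hpow').log hsum_ne).const_mul (1 - α)⁻¹).congr_deriv
    (by simp only [Pi.add_apply, Function.comp_apply]; ring)

theorem inv_one_sub_mul_rpow_sub_rpow_nonpos {t : ℝ} (ht : t ∈ Ioo (1 / 2 : ℝ) 1) :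
    (1 - α)⁻¹ * (t ^ (α - 1) - (1 - t) ^ (α - 1)) ≤ 0 := by
  have h1t : 0 < 1 - t := sub_pos.2 ht.2
  have hlt : 1 - t ≤ t := by linarith [ht.1]
  rcases le_total α 1 with hα | hα
  · refine mul_nonpos_of_nonneg_of_nonpos (inv_nonneg.2 (sub_nonneg.2 hα)) (sub_nonpos.2 ?_)
    exact Real.rpow_le_rpow_of_nonpos h1t hlt (by linarith)
  · refine mul_nonpos_of_nonpos_of_nonneg (inv_nonpos.2 (sub_nonpos.2 hα)) (sub_nonneg.2 ?_)
    exact Real.rpow_le_rpow h1t.le hlt (by linarith)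

theorem antitoneOn_h2 (hα : 0 ≤ α) : AntitoneOn (h2 α) (Icc (1 / 2) 1) := by
  have hcont := (continuousOn_h2 hα).mono (Icc_subset_Icc_left (by norm_num : (0 : ℝ) ≤ 1 / 2))
  have hIoo : ∀ {t}, t ∈ Ioo (1 / 2 : ℝ) 1 → t ∈ Ioo (0 : ℝ) 1 := fun ht =>
    ⟨by linarith [ht.1], ht.2⟩
  rcases eq_or_ne α 1 with rfl | hα1
  · refine antitoneOn_of_hasDerivWithinAt_nonpos (convex_Icc _ _) hcont
      (f' := fun t => Real.log (1 - t) - Real.log t) (fun t ht => ?_) (fun t ht => ?_)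
    · rw [interior_Icc] at ht
      exact (hasDerivAt_h2_one (hIoo ht)).hasDerivWithinAt
    · rw [interior_Icc] at ht
      exact sub_nonpos.2 (Real.log_le_log (by linarith [ht.2]) (by linarith [ht.1]))
  · refine antitoneOn_of_hasDerivWithinAt_nonpos (convex_Icc _ _) hcont
      (f' := fun t =>
        α * ((1 - α)⁻¹ * (t ^ (α - 1) - (1 - t) ^ (α - 1))) / (t ^ α + (1 - t) ^ α))
      (fun t ht => ?_) (fun t ht => ?_)
    · rw [interior_Icc] at ht
      exact (hasDerivAt_h2_of_ne_one hα1 (hIoo ht)).hasDerivWithinAt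
    · rw [interior_Icc] at ht
      exact div_nonpos_of_nonpos_of_nonneg
        (mul_nonpos_of_nonneg_of_nonpos hα (inv_one_sub_mul_rpow_sub_rpow_nonpos ht))
        (rpow_add_one_sub_rpow_pos α (Ioo_subset_Icc_self (hIoo ht))).le

end BinaryRenyi

theorem monotoneOn_fBloch : MonotoneOn fBloch (Ici 0) := fun x hx y _ hxy => by
  unfold fBloch
  gcongr

theorem continuous_fBloch : Continuous fBloch := by
  unfold fBloch
  fun_prop

theorem fBloch_mem_Icc {x : ℝ} (hx : x ∈ Icc (0 : ℝ) 1) :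
    fBloch x ∈ Icc (1 / 2 : ℝ) 1 := by
  have hsqrt : √(2 * x ^ 2 - 1) ≤ 1 := Real.sqrt_le_one.2 (by nlinarith [hx.1, hx.2])
  unfold fBloch
  constructor <;> linarith [Real.sqrt_nonneg (2 * x ^ 2 - 1)]

theorem h2_fBloch_sqrt (α t : ℝ) : h2 α (fBloch √(t ^ 2 + (1 - t) ^ 2)) = h2 α t := by
  have hsq : 2 * √(t ^ 2 + (1 - t) ^ 2) ^ 2 - 1 = (2 * t - 1) ^ 2 := by
    rw [Real.sq_sqrt (by positivity)]
    ring
  rw [fBloch, hsq, Real.sqrt_sq_eq_abs]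
  rcases le_total (2 * t - 1) 0 with ht | ht
  · rw [abs_of_nonpos ht, ← h2_one_sub]
    ring_nf
  · rw [abs_of_nonneg ht]
    ring_nf

theorem AntitoneOn.sInf_image_eq_of_subset_Icc {f : ℝ → ℝ} {a b : ℝ} {A : Set ℝ}
    (hf : AntitoneOn f (Icc a b)) (hfc : ContinuousOn f (Icc a b)) (hA : A ⊆ Icc a b)
    (hne : A.Nonempty) : sInf (f '' A) = f (sSup A) := by
  have hbdd : BddAbove A := ⟨b, fun x hx => (hA hx).2⟩
  obtain ⟨x, hx⟩ := hne
  have hsup : sSup A ∈ Icc a b :=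
    ⟨(hA hx).1.trans (le_csSup hbdd hx), csSup_le ⟨x, hx⟩ fun y hy => (hA hy).2⟩
  exact ((hf.mono hA).map_csSup_of_continuousWithinAt ((hfc _ hsup).mono hA) ⟨x, hx⟩ hbdd).symm

section Density

variable {n m : Type*}

theorem exists_isDensity [Fintype n] [DecidableEq n] [Nonempty n] :
    ∃ ρ : Matrix n n ℂ, IsDensity ρ := by
  obtain ⟨i⟩ := ‹Nonempty n›
  refine ⟨Matrix.diagonal (Pi.single i 1), ?_, ?_⟩
  · exact Matrix.posSemidef_diagonal_iff.2
      fun j => (Pi.single_nonneg.2 zero_le_one : (0 : n → ℂ) ≤ Pi.single i 1) j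
  · simp [Matrix.trace_diagonal]

theorem IsCompletelyPositive.posSemidef {Φ : Matrix n n ℂ → Matrix m m ℂ}
    (hΦ : IsCompletelyPositive Φ) {ρ : Matrix n n ℂ} (hρ : ρ.PosSemidef) :
    (Φ ρ).PosSemidef := by
  let e := Equiv.prodUnique n (Fin 1)
  let e' := Equiv.prodUnique m (Fin 1)
  have hampl := hΦ 1 _ (hρ.submatrix e)
  have hΦρ : ampl (μ := Fin 1) Φ (ρ.submatrix e e) = (Φ ρ).submatrix e' e' := by
    ext p q
    simp only [ampl, Matrix.submatrix_apply, Matrix.of_apply]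
    congr 1
  rw [hΦρ] at hampl
  exact (Matrix.posSemidef_submatrix_equiv _).1 hampl

variable [Fintype n] [Fintype m]

theorem IsDensity.map {Φ : Matrix n n ℂ → Matrix m m ℂ} (hCP : IsCompletelyPositive Φ)
    (hTP : IsTracePreserving Φ) {ρ : Matrix n n ℂ} (hρ : IsDensity ρ) : IsDensity (Φ ρ) :=
  ⟨hCP.posSemidef hρ.1, (hTP ρ).trans hρ.2⟩

theorem IsDensity.sum_eigenvalues [DecidableEq n] {ρ : Matrix n n ℂ} (hρ : IsDensity ρ) :
    ∑ i, hρ.1.1.eigenvalues i = 1 := by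
  have h := hρ.1.1.trace_eq_sum_eigenvalues.symm.trans hρ.2
  rw [← RCLike.ofReal_sum] at h
  exact RCLike.ofReal_inj.1 (h.trans RCLike.ofReal_one.symm)

end Density

section Qubit

theorem Matrix.trace_mul_self_fin_two (σ : Matrix (Fin 2) (Fin 2) ℂ) :
    (σ * σ).trace = σ.trace ^ 2 - 2 * σ.det := by
  simp only [Matrix.trace_fin_two, Matrix.mul_apply, Matrix.det_fin_two, Fin.sum_univ_two]
  ring

theorem Matrix.IsHermitian.re_trace_mul_self_fin_two {σ : Matrix (Fin 2) (Fin 2) ℂ}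
    (hσ : σ.IsHermitian) :
    (σ * σ).trace.re = hσ.eigenvalues 0 ^ 2 + hσ.eigenvalues 1 ^ 2 := by
  rw [Matrix.trace_mul_self_fin_two, hσ.trace_eq_sum_eigenvalues, hσ.det_eq_prod_eigenvalues,
    Fin.sum_univ_two, Fin.prod_univ_two]
  simp only [Complex.coe_algebraMap]
  norm_cast
  ring

variable {σ : Matrix (Fin 2) (Fin 2) ℂ}

theorem IsDensity.eigenvalues_one_fin_two (hσ : IsDensity σ) :
    hσ.1.1.eigenvalues 1 = 1 - hσ.1.1.eigenvalues 0 := by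
  have h := hσ.sum_eigenvalues
  rw [Fin.sum_univ_two] at h
  linarith

theorem IsDensity.re_trace_mul_self_le_one (hσ : IsDensity σ) : (σ * σ).trace.re ≤ 1 := by
  have h0 := hσ.1.eigenvalues_nonneg 0
  have h1 := hσ.1.eigenvalues_nonneg 1
  rw [hσ.1.1.re_trace_mul_self_fin_two, hσ.eigenvalues_one_fin_two] at *
  nlinarith

theorem IsDensity.renyiEntropy_eq_h2 (α : ℝ) (hσ : IsDensity σ) :
    renyiEntropy α σ = h2 α (hσ.1.1.eigenvalues 0) := by
  rw [renyiEntropy, dif_pos hσ.1.1, h2]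
  split_ifs
  · simp only [Fin.sum_univ_two, hσ.eigenvalues_one_fin_two]
    ring
  · simp only [Fin.sum_univ_two, hσ.eigenvalues_one_fin_two]

theorem IsDensity.renyiEntropy_eq_h2_fBloch (α : ℝ) (hσ : IsDensity σ) :
    renyiEntropy α σ = h2 α (fBloch √(σ * σ).trace.re) := by
  rw [hσ.1.1.re_trace_mul_self_fin_two, hσ.eigenvalues_one_fin_two, h2_fBloch_sqrt,
    hσ.renyiEntropy_eq_h2]

end Qubit

/-- Corollary: an exact formula for qubit channels.
For a qubit channel `Φ : H₂ → H₂` and `α ≥ 0`: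
`S_{min,α}(Φ) = h_{2,α}(f(‖Φ‖₁→₂))`. -/
theorem qubit_channel_min_entropy_formula
    (Φ : Matrix (Fin 2) (Fin 2) ℂ →ₗ[ℂ] Matrix (Fin 2) (Fin 2) ℂ)
    (hCP : IsCompletelyPositive ⇑Φ) (hTP : IsTracePreserving ⇑Φ)
    (α : ℝ) (hα : 0 ≤ α) :
    Smin α ⇑Φ = h2 α (fBloch (norm12 ⇑Φ)) := by
  set T := {x | ∃ ρ, IsDensity ρ ∧ x = √((Φ ρ * Φ ρ).trace.re)}
  have hT : T ⊆ Icc 0 1 := by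
    rintro _ ⟨ρ, hρ, rfl⟩
    exact ⟨Real.sqrt_nonneg _, Real.sqrt_le_one.2 (hρ.map hCP hTP).re_trace_mul_self_le_one⟩
  have hT_ne : T.Nonempty := by
    obtain ⟨ρ, hρ⟩ := exists_isDensity (n := Fin 2)
    exact ⟨_, ρ, hρ, rfl⟩
  have hset :
      {x | ∃ ρ, IsDensity ρ ∧ x = renyiEntropy α (Φ ρ)} = (h2 α ∘ fBloch) '' T := by
    ext x
    constructor
    · rintro ⟨ρ, hρ, rfl⟩
      exact ⟨_, ⟨ρ, hρ, rfl⟩, ((hρ.map hCP hTP).renyiEntropy_eq_h2_fBloch α).symm⟩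
    · rintro ⟨_, ⟨ρ, hρ, rfl⟩, rfl⟩
      exact ⟨ρ, hρ, ((hρ.map hCP hTP).renyiEntropy_eq_h2_fBloch α).symm⟩
  have hanti : AntitoneOn (h2 α ∘ fBloch) (Icc 0 1) := fun x hx y hy hxy =>
    antitoneOn_h2 hα (fBloch_mem_Icc hx) (fBloch_mem_Icc hy) (monotoneOn_fBloch hx.1 hy.1 hxy)
  have hcont : ContinuousOn (h2 α ∘ fBloch) (Icc 0 1) :=
    ((continuousOn_h2 hα).mono (Icc_subset_Icc (by norm_num) le_rfl)).comp
      continuous_fBloch.continuousOn fun _ hx => fBloch_mem_Icc hx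
  rw [Smin, hset, hanti.sInf_image_eq_of_subset_Icc hcont hT hT_ne]
  rfl

end
end

section
/- Let Φ: H_n → H_k be a unital trace-preserving linear map, and let ρ be any Hermitian operator on ℂ^n ⊗ ℂ^m, with ρ_K = Tr_{ℂ^n}[ρ] its partial trace over the first factor. Then Tr[ ((Φ ⊗ id_m)(ρ))² ] ≤ (1/k − ‖A_Φ‖_∞/n)·Tr[ρ_K²] + ‖A_Φ‖_∞·Tr[ρ²], where id_m is the identity map on m×m Hermitian matrices. -/
open scoped Matrix Kronecker BigOperators Classical ComplexOrder
open Filter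

noncomputable section

variable {ι κ μ : Type*} [Fintype ι] [DecidableEq ι] [Fintype κ] [DecidableEq κ]
  [Fintype μ] [DecidableEq μ]

/-! Split `ρ` into blocks `X = ρ_ab` over the second factor: the three traces become sums over
`a, b` of `Tr[Φ(X) Φ(X)ᴴ]`, `|Tr X|²` and `Tr[X Xᴴ]`, since `ρ_ba = ρ_abᴴ`. In the basis `I, M_i`
a block reads `X = (Tr X / n) I + ∑ c_i M_i` with `c_i = Tr(X M_i)`, so unitality gives
`Φ X = (Tr X / k) I + ∑ c_i Φ(M_i)`, and trace preservation makes the `Φ(M_i)` traceless. Hence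
`Tr[Φ(X) Φ(X)ᴴ] = |Tr X|²/k + c* A_Φ c ≤ |Tr X|²/k + ‖A_Φ‖ ∑ |c_i|²`, while by Parseval
`Tr[X Xᴴ] = |Tr X|²/n + ∑ |c_i|²`. -/

open scoped RealInnerProductSpace

theorem dotProduct_mulVec_le_opNorm_mul {N : ℕ} (A : Matrix (Fin N) (Fin N) ℝ) (x : Fin N → ℝ) :
    x ⬝ᵥ A *ᵥ x ≤ opNorm A * (x ⬝ᵥ x) := by
  set T := Matrix.toEuclideanCLM (𝕜 := ℝ) A
  set v : EuclideanSpace ℝ (Fin N) := WithLp.toLp 2 x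
  have hquad : x ⬝ᵥ A *ᵥ x = ⟪v, T v⟫ := by
    simp [T, v, EuclideanSpace.inner_toLp_toLp, dotProduct_comm]
  have hsq : x ⬝ᵥ x = ‖v‖ ^ 2 := by
    rw [← real_inner_self_eq_norm_sq, EuclideanSpace.inner_toLp_toLp, star_trivial]
  rw [hquad, hsq]
  calc ⟪v, T v⟫ ≤ ‖v‖ * ‖T v‖ := real_inner_le_norm _ _
    _ ≤ ‖v‖ * (‖T‖ * ‖v‖) := by gcongr; exact T.le_opNorm v
    _ = opNorm A * ‖v‖ ^ 2 := by rw [opNorm]; ring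

theorem re_sum_sum_mul_star_mul_le_opNorm_mul {N : ℕ} (A : Matrix (Fin N) (Fin N) ℝ)
    (c : Fin N → ℂ) :
    (∑ i, ∑ j, c i * star (c j) * (A i j : ℂ)).re ≤ opNorm A * ∑ i, Complex.normSq (c i) := by
  set x : Fin N → ℝ := fun i => (c i).re
  set y : Fin N → ℝ := fun i => (c i).im
  have hform : (∑ i, ∑ j, c i * star (c j) * (A i j : ℂ)).re = x ⬝ᵥ A *ᵥ x + y ⬝ᵥ A *ᵥ y := by
    simp only [Complex.re_sum, dotProduct, Matrix.mulVec, Finset.mul_sum, ← Finset.sum_add_distrib]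
    refine Finset.sum_congr rfl fun i _ => Finset.sum_congr rfl fun j _ => ?_
    simp only [x, y, Complex.star_def, Complex.mul_re, Complex.mul_im, Complex.conj_re,
      Complex.conj_im, Complex.ofReal_re, Complex.ofReal_im]
    ring
  have hnorm : ∑ i, Complex.normSq (c i) = x ⬝ᵥ x + y ⬝ᵥ y := by
    simp only [dotProduct, ← Finset.sum_add_distrib, Complex.normSq_apply, x, y]
  rw [hform, hnorm, mul_add]
  exact add_le_add (dotProduct_mulVec_le_opNorm_mul A x) (dotProduct_mulVec_le_opNorm_mul A y)

theorem Matrix.IsHermitian.ofReal_re_trace_mul {n : Type*} [Fintype n] {P Q : Matrix n n ℂ}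
    (hP : P.IsHermitian) (hQ : Q.IsHermitian) : (((P * Q).trace.re : ℝ) : ℂ) = (P * Q).trace := by
  refine Complex.conj_eq_iff_re.mp ?_
  rw [← Complex.star_def, ← Matrix.trace_conjTranspose, Matrix.conjTranspose_mul, hP.eq, hQ.eq,
    Matrix.trace_mul_comm]

theorem Matrix.IsHermitian.trace_conjTranspose_mul {n : Type*} [Fintype n] {P : Matrix n n ℂ}
    (hP : P.IsHermitian) (X : Matrix n n ℂ) : (Xᴴ * P).trace = star (X * P).trace := by
  rw [← Matrix.trace_conjTranspose, Matrix.conjTranspose_mul, hP.eq, Matrix.trace_mul_comm]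

theorem trace_smul_one_add_sum_mul_smul_one_add_sum {N : ℕ} {B : Fin N → Matrix κ κ ℂ}
    (hB : ∀ i, (B i).trace = 0) (s t : ℂ) (c d : Fin N → ℂ) :
    ((s • 1 + ∑ i, c i • B i) * (t • 1 + ∑ j, d j • B j)).trace
      = s * t * Fintype.card κ + ∑ i, ∑ j, c i * d j * (B i * B j).trace := by
  simp only [add_mul, mul_add, Matrix.smul_mul, Matrix.mul_smul, Finset.sum_mul,
    Finset.mul_sum, one_mul, mul_one, Matrix.trace_add, Matrix.trace_sum, Matrix.trace_smul,
    Matrix.trace_one, smul_smul, smul_eq_mul, hB, mul_zero, Finset.sum_const_zero, add_zero]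
  ring_nf
  congr 1
  rw [Finset.sum_comm]
  exact Finset.sum_congr rfl fun i _ => Finset.sum_congr rfl fun j _ => by ring

theorem mul_inv_mul_mul_inv_mul_self {K : Type*} [Field K] (a b x : K) :
    a * x⁻¹ * (b * x⁻¹) * x = a * b * x⁻¹ := by
  rcases eq_or_ne x 0 with rfl | hx
  · simp
  · field_simp

theorem Complex.re_mul_star_mul_inv_natCast (z : ℂ) (r : ℕ) :
    (z * star z * (r : ℂ)⁻¹).re = Complex.normSq z / r := by
  rw [Complex.star_def, Complex.mul_conj, ← Complex.ofReal_natCast, ← Complex.ofReal_inv,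
    ← Complex.ofReal_mul, Complex.ofReal_re, div_eq_mul_inv]

section TracelessBasis

variable {n : Type*} [Fintype n] {N : ℕ} {M : Fin N → Matrix n n ℂ}

theorem mem_span_of_trace_eq_zero
    (hMspan : ∀ ρ : Matrix n n ℂ, ρ.IsHermitian → ρ.trace = 0 →
      ρ ∈ Submodule.span ℝ (Set.range M))
    {Z : Matrix n n ℂ} (hZ : Z.trace = 0) : Z ∈ Submodule.span ℂ (Set.range M) := by
  have hself : ∀ H : selfAdjoint (Matrix n n ℂ), (H : Matrix n n ℂ).trace = 0 →
      (H : Matrix n n ℂ) ∈ Submodule.span ℂ (Set.range M) := fun H hH =>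
    Submodule.span_le_restrictScalars ℝ ℂ _ (hMspan H H.prop hH)
  have hstar : (star Z).trace = 0 := by
    rw [Matrix.star_eq_conjTranspose, Matrix.trace_conjTranspose, hZ, star_zero]
  rw [← realPart_add_I_smul_imaginaryPart Z]
  refine Submodule.add_mem _ (hself _ ?_) (Submodule.smul_mem _ _ (hself _ ?_))
  · simp [realPart_apply_coe, hZ, hstar]
  · simp [imaginaryPart_apply_coe, hZ, hstar]

theorem eq_trace_smul_one_add_sum [DecidableEq n] [Nonempty n] (hMtr : ∀ i, (M i).trace = 0)
    (hMorth : ∀ i j, (M i * M j).trace = if i = j then 1 else 0)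
    (hMspan : ∀ ρ : Matrix n n ℂ, ρ.IsHermitian → ρ.trace = 0 →
      ρ ∈ Submodule.span ℝ (Set.range M))
    (X : Matrix n n ℂ) :
    X = (X.trace * (Fintype.card n : ℂ)⁻¹) • 1 + ∑ i, (X * M i).trace • M i := by
  set Y := X - (X.trace * (Fintype.card n : ℂ)⁻¹) • 1 with hY
  have hXY : X = (X.trace * (Fintype.card n : ℂ)⁻¹) • 1 + Y := by rw [hY]; abel
  have hYtr : Y.trace = 0 := by
    have : (Fintype.card n : ℂ) ≠ 0 := Nat.cast_ne_zero.mpr Fintype.card_ne_zero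
    rw [hY, Matrix.trace_sub, Matrix.trace_smul, Matrix.trace_one, smul_eq_mul,
      inv_mul_cancel_right₀ this, sub_self]
  obtain ⟨c, hc⟩ := (Submodule.mem_span_range_iff_exists_fun ℂ).mp
    (mem_span_of_trace_eq_zero hMspan hYtr)
  have hcoeff : ∀ j, (X * M j).trace = c j := by
    intro j
    rw [hXY, ← hc, add_mul, Finset.sum_mul, Matrix.trace_add, Matrix.trace_sum]
    simp [Matrix.trace_smul, hMtr, hMorth]
  conv_lhs => rw [hXY, ← hc]
  simp only [hcoeff]

theorem trace_mul_eq_add_sum_trace_mul_mul [DecidableEq n] [Nonempty n]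
    (hMtr : ∀ i, (M i).trace = 0)
    (hMorth : ∀ i j, (M i * M j).trace = if i = j then 1 else 0)
    (hMspan : ∀ ρ : Matrix n n ℂ, ρ.IsHermitian → ρ.trace = 0 →
      ρ ∈ Submodule.span ℝ (Set.range M))
    (X Y : Matrix n n ℂ) :
    (X * Y).trace = X.trace * Y.trace * (Fintype.card n : ℂ)⁻¹
      + ∑ i, (X * M i).trace * (Y * M i).trace := by
  have hexp := eq_trace_smul_one_add_sum hMtr hMorth hMspan
  refine (congrArg₂ (fun A B => (A * B).trace) (hexp X) (hexp Y)).trans ?_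
  simp only [trace_smul_one_add_sum_mul_smul_one_add_sum hMtr, hMorth, mul_ite, mul_one,
    mul_zero, Finset.sum_ite_eq, Finset.mem_univ, if_true]
  rw [mul_inv_mul_mul_inv_mul_self]

end TracelessBasis

section TracePreservingMap

variable {Φ : Matrix ι ι ℂ →ₗ[ℂ] Matrix κ κ ℂ} {N : ℕ} {M : Fin N → Matrix ι ι ℂ}

theorem map_eq_trace_smul_one_add_sum [Nonempty ι] (hU : IsUnital ⇑Φ)
    (hMtr : ∀ i, (M i).trace = 0)
    (hMorth : ∀ i j, (M i * M j).trace = if i = j then 1 else 0)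
    (hMspan : ∀ ρ : Matrix ι ι ℂ, ρ.IsHermitian → ρ.trace = 0 →
      ρ ∈ Submodule.span ℝ (Set.range M))
    (X : Matrix ι ι ℂ) :
    Φ X = (X.trace * (Fintype.card κ : ℂ)⁻¹) • 1 + ∑ i, (X * M i).trace • Φ (M i) := by
  conv_lhs => rw [eq_trace_smul_one_add_sum hMtr hMorth hMspan X]
  rw [map_add, map_sum, mul_smul, map_smul, hU, smul_smul]
  simp only [map_smul]

theorem re_trace_map_mul_map_conjTranspose [Nonempty ι] (hU : IsUnital ⇑Φ)
    (hTP : IsTracePreserving ⇑Φ) (hHP : IsHermitianPreserving ⇑Φ)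
    (hMherm : ∀ i, (M i).IsHermitian) (hMtr : ∀ i, (M i).trace = 0)
    (hMorth : ∀ i j, (M i * M j).trace = if i = j then 1 else 0)
    (hMspan : ∀ ρ : Matrix ι ι ℂ, ρ.IsHermitian → ρ.trace = 0 →
      ρ ∈ Submodule.span ℝ (Set.range M))
    (X : Matrix ι ι ℂ) :
    (Φ X * Φ Xᴴ).trace.re = Complex.normSq X.trace / Fintype.card κ
      + (∑ i, ∑ j, (X * M i).trace * star (X * M j).trace * (APhi Φ M i j : ℂ)).re := by
  have hΦ := map_eq_trace_smul_one_add_sum hU hMtr hMorth hMspan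
  have hgram : ∀ i j, (Φ (M i) * Φ (M j)).trace = (APhi Φ M i j : ℂ) := fun i j =>
    ((hHP _ (hMherm i)).ofReal_re_trace_mul (hHP _ (hMherm j))).symm
  rw [hΦ X, hΦ Xᴴ, trace_smul_one_add_sum_mul_smul_one_add_sum
    (fun i => (hTP (M i)).trans (hMtr i)), mul_inv_mul_mul_inv_mul_self,
    Matrix.trace_conjTranspose, Complex.add_re, Complex.re_mul_star_mul_inv_natCast]
  simp only [(hMherm _).trace_conjTranspose_mul, hgram]

theorem re_trace_map_mul_map_conjTranspose_le [Nonempty ι] (hU : IsUnital ⇑Φ)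
    (hTP : IsTracePreserving ⇑Φ) (hHP : IsHermitianPreserving ⇑Φ)
    (hMherm : ∀ i, (M i).IsHermitian) (hMtr : ∀ i, (M i).trace = 0)
    (hMorth : ∀ i j, (M i * M j).trace = if i = j then 1 else 0)
    (hMspan : ∀ ρ : Matrix ι ι ℂ, ρ.IsHermitian → ρ.trace = 0 →
      ρ ∈ Submodule.span ℝ (Set.range M))
    (X : Matrix ι ι ℂ) :
    (Φ X * Φ Xᴴ).trace.re ≤
      (1 / Fintype.card κ - opNorm (APhi Φ M) / Fintype.card ι) * Complex.normSq X.trace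
        + opNorm (APhi Φ M) * (X * Xᴴ).trace.re := by
  have hparseval : (X * Xᴴ).trace.re = Complex.normSq X.trace / Fintype.card ι
      + ∑ i, Complex.normSq (X * M i).trace := by
    rw [trace_mul_eq_add_sum_trace_mul_mul hMtr hMorth hMspan, Matrix.trace_conjTranspose,
      Complex.add_re, Complex.re_mul_star_mul_inv_natCast, Complex.re_sum]
    simp only [(hMherm _).trace_conjTranspose_mul, Complex.star_def, Complex.mul_conj,
      Complex.ofReal_re]
  calc (Φ X * Φ Xᴴ).trace.re
      = Complex.normSq X.trace / Fintype.card κ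
        + (∑ i, ∑ j, (X * M i).trace * star (X * M j).trace * (APhi Φ M i j : ℂ)).re :=
        re_trace_map_mul_map_conjTranspose hU hTP hHP hMherm hMtr hMorth hMspan X
    _ ≤ Complex.normSq X.trace / Fintype.card κ
        + opNorm (APhi Φ M) * ∑ i, Complex.normSq (X * M i).trace := by
        gcongr
        exact re_sum_sum_mul_star_mul_le_opNorm_mul _ _
    _ = _ := by rw [hparseval]; ring

end TracePreservingMap

section Block

variable {m n o : Type*}

/-- Blocks are indexed by the second factor; `ampl Φ ρ` applies `Φ` to each of them. -/
def block (ρ : Matrix (n × m) (n × m) ℂ) (a b : m) : Matrix n n ℂ :=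
  Matrix.of fun i j => ρ (i, a) (j, b)

theorem conjTranspose_block {ρ : Matrix (n × m) (n × m) ℂ} (hρ : ρ.IsHermitian) (a b : m) :
    (block ρ a b)ᴴ = block ρ b a := by
  ext i j
  exact congrFun (congrFun hρ (i, b)) (j, a)

theorem trace_ampl_mul_ampl [Fintype m] [Fintype o] (Φ : Matrix n n ℂ → Matrix o o ℂ)
    (ρ : Matrix (n × m) (n × m) ℂ) :
    (ampl Φ ρ * ampl Φ ρ).trace = ∑ a, ∑ b, (Φ (block ρ a b) * Φ (block ρ b a)).trace := by
  simp only [Matrix.trace, Matrix.diag, Matrix.mul_apply, Fintype.sum_prod_type, ampl, block,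
    Matrix.of_apply]
  rw [Finset.sum_comm]
  refine Finset.sum_congr rfl fun a _ => ?_
  simp_rw [Finset.sum_comm (s := Finset.univ (α := o)) (t := Finset.univ (α := m))]

theorem trace_mul_self_eq_sum_block [Fintype m] [Fintype n] (ρ : Matrix (n × m) (n × m) ℂ) :
    (ρ * ρ).trace = ∑ a, ∑ b, (block ρ a b * block ρ b a).trace :=
  trace_ampl_mul_ampl id ρ

theorem trace_ptraceFst_mul_self [Fintype m] [Fintype n] (ρ : Matrix (n × m) (n × m) ℂ) :
    (ptraceFst ρ * ptraceFst ρ).trace = ∑ a, ∑ b, (block ρ a b).trace * (block ρ b a).trace := by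
  simp [Matrix.trace, Matrix.mul_apply, ptraceFst, block]

end Block

theorem unital_ampliation_two_norm_bound_general {n k m : ℕ} (hn : 0 < n)
    (Φ : Matrix (Fin n) (Fin n) ℂ →ₗ[ℂ] Matrix (Fin k) (Fin k) ℂ)
    (hU : IsUnital ⇑Φ) (hTP : IsTracePreserving ⇑Φ) (hHP : IsHermitianPreserving ⇑Φ)
    (M : Fin (n ^ 2 - 1) → Matrix (Fin n) (Fin n) ℂ)
    (hMherm : ∀ i, (M i).IsHermitian) (hMtr : ∀ i, (M i).trace = 0)
    (hMorth : ∀ i j, ((M i) * (M j)).trace = if i = j then 1 else 0)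
    (hMspan : ∀ ρ : Matrix (Fin n) (Fin n) ℂ, ρ.IsHermitian → ρ.trace = 0 →
      ρ ∈ Submodule.span ℝ (Set.range M))
    (ρ : Matrix (Fin n × Fin m) (Fin n × Fin m) ℂ) (hρ : ρ.IsHermitian) :
    ((ampl ⇑Φ ρ) * (ampl ⇑Φ ρ)).trace.re ≤
      (1 / k - opNorm (APhi ⇑Φ M) / n) * ((ptraceFst ρ) * (ptraceFst ρ)).trace.re +
        opNorm (APhi ⇑Φ M) * (ρ * ρ).trace.re := by
  have : Nonempty (Fin n) := ⟨⟨0, hn⟩⟩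
  have hblock : ∀ a b, (Φ (block ρ a b) * Φ (block ρ b a)).trace.re ≤
      (1 / k - opNorm (APhi ⇑Φ M) / n) * ((block ρ a b).trace * (block ρ b a).trace).re
        + opNorm (APhi ⇑Φ M) * (block ρ a b * block ρ b a).trace.re := by
    intro a b
    rw [← conjTranspose_block hρ a b, Matrix.trace_conjTranspose, Complex.star_def,
      Complex.mul_conj, Complex.ofReal_re]
    simpa only [Fintype.card_fin] using
      re_trace_map_mul_map_conjTranspose_le hU hTP hHP hMherm hMtr hMorth hMspan (block ρ a b)
  rw [trace_ampl_mul_ampl, trace_mul_self_eq_sum_block, trace_ptraceFst_mul_self]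
  simp only [Complex.re_sum, Finset.mul_sum, ← Finset.sum_add_distrib]
  exact Finset.sum_le_sum fun a _ => Finset.sum_le_sum fun b _ => hblock a b

/-- Lemma 7 of the paper.
For a unital trace-preserving linear map `Φ : H_n → H_k` and any Hermitian `ρ` on `ℂⁿ ⊗ ℂᵐ`:
`Tr[((Φ⊗id)ρ)²] ≤ (1/k − ‖A_Φ‖∞/n)·Tr[ρ_K²] + ‖A_Φ‖∞·Tr[ρ²]`. -/
theorem unital_ampliation_two_norm_bound {n k m : ℕ} (hn : 0 < n) (hk : 0 < k)
    (Φ : Matrix (Fin n) (Fin n) ℂ →ₗ[ℂ] Matrix (Fin k) (Fin k) ℂ)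
    (hU : IsUnital ⇑Φ) (hTP : IsTracePreserving ⇑Φ) (hHP : IsHermitianPreserving ⇑Φ)
    (M : Fin (n ^ 2 - 1) → Matrix (Fin n) (Fin n) ℂ)
    (hMherm : ∀ i, (M i).IsHermitian) (hMtr : ∀ i, (M i).trace = 0)
    (hMorth : ∀ i j, ((M i) * (M j)).trace = if i = j then 1 else 0)
    (hMspan : ∀ ρ : Matrix (Fin n) (Fin n) ℂ, ρ.IsHermitian → ρ.trace = 0 →
      ρ ∈ Submodule.span ℝ (Set.range M))
    (ρ : Matrix (Fin n × Fin m) (Fin n × Fin m) ℂ) (hρ : ρ.IsHermitian) :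
    ((ampl ⇑Φ ρ) * (ampl ⇑Φ ρ)).trace.re ≤
      (1 / k - opNorm (APhi ⇑Φ M) / n) * ((ptraceFst ρ) * (ptraceFst ρ)).trace.re +
        opNorm (APhi ⇑Φ M) * (ρ * ρ).trace.re :=
  unital_ampliation_two_norm_bound_general hn Φ hU hTP hHP M hMherm hMtr hMorth hMspan ρ hρ

end
end

section
/- Let (x_1,y_1), …, (x_k,y_k) be k distinct pairs in ℤ_n × ℤ_n and let Ψ^C: H_n → H_k be the complementary channel [Ψ^C(ρ)]_{l,m} = (1/k)·Tr[W_{x_l,y_l} ρ W_{x_m,y_m}^*] of the channel Ψ(ρ) = (1/k)Σ_{l=1}^{k} W_{x_l,y_l} ρ W_{x_l,y_l}^*. Then ‖A_{Ψ^C}‖_∞ = (n/(2k²))·max_{(a,b) ∈ S_n} N(a,b), and consequently γ(Ψ^C) = 1/k + ((n−1)/(2k²))·max_{(a,b) ∈ S_n} N(a,b). -/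
open scoped Matrix Kronecker BigOperators Classical ComplexOrder
open Filter

noncomputable section

variable {ι κ μ : Type*} [Fintype ι] [DecidableEq ι] [Fintype κ] [DecidableEq κ]
  [Fintype μ] [DecidableEq μ]

/-!
Write `T_q(ρ) = Tr[W_q ρ]` for the Weyl coefficients of `ρ`. Since `W_mᴴ W_l` is a phase times
`W_{w_l - w_m}`, the entries of `Ψ^C(ρ)` are, up to phases, `T_{w_l - w_m}(ρ) / k`; for Hermitian
`ρ` this gives `Tr[Ψ^C(ρ)²] = (2k²)⁻¹ Σ_q N(q) |T_q(ρ)|²`, while Parseval for the discrete Fourier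
transform gives `Σ_q |T_q(ρ)|² = n Tr[ρ²]`. The quadratic form of `A_{Ψ^C}` at `x` is
`Tr[Ψ^C(ρ_x)²]` with `ρ_x = Σ x_i M_i`, and `‖x‖² = Tr[ρ_x²]`. For traceless `ρ` the coefficient
`T_0(ρ)` vanishes, and every other `N(q)` is at most `max_{S_n} N` because `S_n` contains `q` or
`-q`; so the Rayleigh quotient is at most `n / (2k²) · max_{S_n} N`, and a Hermitian combination of
`W_{q₀}` and `W_{q₀}ᴴ` for a maximiser `q₀` attains it. Finally `N ≤ 2k` puts `γ` in its first
branch.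
-/

open ZMod in
lemma ZMod.sum_norm_sq_dft {N : ℕ} [NeZero N] (Φ : ZMod N → ℂ) :
    ∑ k, ‖𝓕 Φ k‖ ^ 2 = N * ∑ j, ‖Φ j‖ ^ 2 := by
  have horth : ∀ j j' : ZMod N,
      ∑ k, stdAddChar (-(j * k)) * starRingEnd ℂ (stdAddChar (-(j' * k))) =
        if j' - j = 0 then (N : ℂ) else 0 := by
    intro j j'
    have h := AddChar.sum_mulShift (j' - j) (isPrimitive_stdAddChar N)
    rw [ZMod.card, Nat.cast_ite, Nat.cast_zero] at h
    rw [← h]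
    refine Finset.sum_congr rfl fun k _ => ?_
    rw [← AddChar.map_neg_eq_conj, ← AddChar.map_add_eq_mul]
    ring_nf
  apply Complex.ofReal_injective
  push_cast
  simp_rw [← Complex.mul_conj', dft_apply, smul_eq_mul, map_sum, map_mul, Finset.sum_mul_sum,
    Finset.mul_sum]
  rw [Finset.sum_comm]
  refine Finset.sum_congr rfl fun j _ => ?_
  rw [Finset.sum_comm]
  have hfactor : ∀ j', ∑ k, stdAddChar (-(j * k)) * Φ j *
      (starRingEnd ℂ (stdAddChar (-(j' * k))) * starRingEnd ℂ (Φ j')) =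
      (∑ k, stdAddChar (-(j * k)) * starRingEnd ℂ (stdAddChar (-(j' * k)))) *
        (Φ j * starRingEnd ℂ (Φ j')) := fun j' => by
    rw [Finset.sum_mul]
    exact Finset.sum_congr rfl fun k _ => by ring
  simp [hfactor, horth, sub_eq_zero]

lemma Matrix.IsHermitian.re_trace_mul_self {ι : Type*} [Fintype ι] {A : Matrix ι ι ℂ}
    (hA : A.IsHermitian) : (A * A).trace.re = ∑ i, ∑ j, ‖A i j‖ ^ 2 := by
  simp only [Matrix.trace, Matrix.diag_apply, Matrix.mul_apply, Complex.re_sum]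
  refine Finset.sum_congr rfl fun i _ => Finset.sum_congr rfl fun j _ => ?_
  rw [← hA.apply j i, RCLike.star_def, Complex.mul_conj', ← Complex.ofReal_pow,
    Complex.ofReal_re]

lemma Matrix.isHermitian_smul_add_star_smul_conjTranspose {ι : Type*} (A : Matrix ι ι ℂ)
    (c : ℂ) : (c • A + star c • Aᴴ).IsHermitian := by
  simp [Matrix.IsHermitian, Matrix.conjTranspose_add, Matrix.conjTranspose_smul, add_comm]

lemma Matrix.exists_smul_add_star_smul_conjTranspose_ne_zero {ι : Type*} {A : Matrix ι ι ℂ}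
    (hA : A ≠ 0) : ∃ c : ℂ, c • A + star c • Aᴴ ≠ 0 := by
  by_contra! h
  apply hA
  have h2 : (2 * Complex.I) • A = Complex.I • ((1 : ℂ) • A + star (1 : ℂ) • Aᴴ) +
      (Complex.I • A + star Complex.I • Aᴴ) := by
    simp only [star_one, one_smul, RCLike.star_def, Complex.conj_I, smul_add, neg_smul]
    module
  rw [h 1, h Complex.I, smul_zero, add_zero] at h2
  exact (smul_eq_zero.mp h2).resolve_left (by simp)

lemma ContinuousLinearMap.norm_eq_of_abs_reApplyInnerSelf_le {𝕜 E : Type*} [RCLike 𝕜]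
    [NormedAddCommGroup E] [InnerProductSpace 𝕜 E] {T : E →L[𝕜] E}
    (hT : (T : E →ₗ[𝕜] E).IsSymmetric) {t : ℝ}
    (hle : ∀ x, |T.reApplyInnerSelf x| ≤ t * ‖x‖ ^ 2) {x₀ : E} (hx₀ : x₀ ≠ 0)
    (heq : T.reApplyInnerSelf x₀ = t * ‖x₀‖ ^ 2) : ‖T‖ = t := by
  have hx₀' : 0 < ‖x₀‖ ^ 2 := by positivity
  have ht : 0 ≤ t := nonneg_of_mul_nonneg_left ((abs_nonneg _).trans (hle x₀)) hx₀'
  rw [T.norm_eq_iSup_rayleighQuotient hT]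
  refine le_antisymm (ciSup_le fun x => ?_) (le_ciSup_of_le T.bddAbove_rayleighQuotient x₀ ?_)
  · rcases eq_or_ne x 0 with rfl | hx
    · simpa using ht
    · have hx' : 0 < ‖x‖ ^ 2 := pow_pos (norm_pos_iff.2 hx) 2
      rw [rayleighQuotient, abs_div, abs_of_pos hx', div_le_iff₀ hx']
      exact hle x
  · rw [rayleighQuotient, heq, mul_div_cancel_right₀ _ hx₀'.ne', abs_of_nonneg ht]

section APhi

variable {ι κ : Type*} [Fintype κ] {N : ℕ}

lemma re_trace_sum_smul_mul_sum_smul (x y : Fin N → ℝ) (P Q : Fin N → Matrix κ κ ℂ) :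
    ((∑ i, x i • P i) * ∑ j, y j • Q j).trace.re =
      ∑ i, ∑ j, x i * y j * (P i * Q j).trace.re := by
  simp only [Finset.sum_mul_sum, Matrix.trace_sum, Complex.re_sum, Matrix.smul_mul,
    Matrix.mul_smul, smul_smul, Matrix.trace_smul, Complex.smul_re, smul_eq_mul]
  refine Finset.sum_congr rfl fun i _ => Finset.sum_congr rfl fun j _ => ?_
  ring

lemma isHermitian_APhi (Φ : Matrix ι ι ℂ → Matrix κ κ ℂ) (M : Fin N → Matrix ι ι ℂ) :
    (APhi Φ M).IsHermitian := by
  ext i j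
  simp only [Matrix.conjTranspose_apply, star_trivial, APhi, Matrix.of_apply]
  rw [Matrix.trace_mul_comm]

open scoped RealInnerProductSpace in
lemma inner_toEuclideanCLM_APhi (Φ : Matrix ι ι ℂ →ₗ[ℝ] Matrix κ κ ℂ) (M : Fin N → Matrix ι ι ℂ)
    (x : EuclideanSpace ℝ (Fin N)) :
    ⟪x, Matrix.toEuclideanCLM (𝕜 := ℝ) (APhi Φ M) x⟫ =
      (Φ (∑ i, x i • M i) * Φ (∑ i, x i • M i)).trace.re := by
  simp only [Matrix.inner_toEuclideanCLM, map_sum, map_smul]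
  rw [re_trace_sum_smul_mul_sum_smul]
  simp only [dotProduct, Matrix.mulVec, APhi, Matrix.of_apply, Finset.mul_sum]
  refine Finset.sum_congr rfl fun i _ => Finset.sum_congr rfl fun j _ => ?_
  ring

lemma norm_sq_eq_re_trace_of_orthonormal [Fintype ι] {M : Fin N → Matrix ι ι ℂ}
    (hM : ∀ i j, (M i * M j).trace = if i = j then 1 else 0) (x : EuclideanSpace ℝ (Fin N)) :
    ‖x‖ ^ 2 = ((∑ i, x i • M i) * ∑ i, x i • M i).trace.re := by
  rw [EuclideanSpace.norm_sq_eq, re_trace_sum_smul_mul_sum_smul]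
  simp [hM, apply_ite Complex.re, sq]

lemma opNorm_APhi_eq [Fintype ι] (Φ : Matrix ι ι ℂ →ₗ[ℝ] Matrix κ κ ℂ)
    {M : Fin N → Matrix ι ι ℂ} (hM : ∀ i j, (M i * M j).trace = if i = j then 1 else 0) {t : ℝ}
    (hle : ∀ x : Fin N → ℝ, |(Φ (∑ i, x i • M i) * Φ (∑ i, x i • M i)).trace.re| ≤
      t * ((∑ i, x i • M i) * ∑ i, x i • M i).trace.re)
    (hex : ∃ x : Fin N → ℝ, ∑ i, x i • M i ≠ 0 ∧
      (Φ (∑ i, x i • M i) * Φ (∑ i, x i • M i)).trace.re =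
        t * ((∑ i, x i • M i) * ∑ i, x i • M i).trace.re) :
    opNorm (APhi Φ M) = t := by
  obtain ⟨x₀, hx₀, heq⟩ := hex
  set T := Matrix.toEuclideanCLM (𝕜 := ℝ) (APhi Φ M)
  have hquad : ∀ x, T.reApplyInnerSelf x =
      (Φ (∑ i, x i • M i) * Φ (∑ i, x i • M i)).trace.re := fun x => by
    rw [ContinuousLinearMap.reApplyInnerSelf_apply, RCLike.re_to_real, real_inner_comm,
      inner_toEuclideanCLM_APhi]
  refine T.norm_eq_of_abs_reApplyInnerSelf_le
    (Matrix.isSymmetric_toEuclideanLin_iff.mpr (isHermitian_APhi Φ M)) (fun x => ?_)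
    (x₀ := WithLp.toLp 2 x₀) (fun h => hx₀ ?_) ?_
  · rw [hquad, norm_sq_eq_re_trace_of_orthonormal hM]
    exact hle x
  · simp [(WithLp.toLp_eq_zero 2).mp h]
  · rw [hquad, norm_sq_eq_re_trace_of_orthonormal hM]
    exact heq

end APhi

lemma gammaPhi_of_le (n k : ℕ) [NeZero n] {a : ℝ} (ha : a ≤ 2 * k) :
    gammaPhi n k (n / (2 * (k : ℝ) ^ 2) * a) = 1 / k + (n - 1) / (2 * (k : ℝ) ^ 2) * a := by
  have hn : (n : ℝ) ≠ 0 := Nat.cast_ne_zero.2 (NeZero.ne n)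
  rw [gammaPhi, if_pos]
  · field_simp
  rcases k.eq_zero_or_pos with rfl | hk
  · simp
  calc (k : ℝ) * (n / (2 * k ^ 2) * a) = n * (a / (2 * k)) := by field_simp
    _ ≤ n * 1 := by
      gcongr
      rwa [div_le_one (by positivity)]
    _ = n := mul_one _

section PairDiffCount

variable {G : Type*} [AddCommGroup G] [DecidableEq G] {k : ℕ}

def pairDiffCount (w : Fin k → G) (q : G) : ℕ :=
  (Finset.univ.filter fun lm : Fin k × Fin k => w lm.2 - w lm.1 = q).card

lemma pairDiffCount_le {w : Fin k → G} (hw : Function.Injective w) (q : G) :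
    pairDiffCount w q ≤ k := by
  refine (Finset.card_le_card_of_injOn Prod.fst (fun _ _ => Finset.mem_coe.2 (Finset.mem_univ _))
    fun a ha b hb hab => Prod.ext hab (hw ?_)).trans_eq (Finset.card_fin k)
  simp only [Finset.coe_filter, Finset.mem_univ, true_and, Set.mem_ofPred_eq] at ha hb
  simpa [hab] using ha.trans hb.symm

lemma sum_sub_eq_sum_pairDiffCount_smul [Fintype G] {M : Type*} [AddCommMonoid M]
    (w : Fin k → G) (f : G → M) :
    ∑ lm : Fin k × Fin k, f (w lm.2 - w lm.1) = ∑ q, pairDiffCount w q • f q := by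
  rw [← Finset.sum_fiberwise' Finset.univ (fun lm : Fin k × Fin k => w lm.2 - w lm.1) f]
  simp [pairDiffCount]

-- The paper's `N(a, b)`.
def symmPairDiffCount (w : Fin k → G) (q : G) : ℕ := pairDiffCount w q + pairDiffCount w (-q)

lemma symmPairDiffCount_neg (w : Fin k → G) (q : G) :
    symmPairDiffCount w (-q) = symmPairDiffCount w q := by
  rw [symmPairDiffCount, symmPairDiffCount, neg_neg, add_comm]

lemma symmPairDiffCount_le {w : Fin k → G} (hw : Function.Injective w) (q : G) :
    symmPairDiffCount w q ≤ 2 * k := by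
  have := pairDiffCount_le hw q
  have := pairDiffCount_le hw (-q)
  rw [symmPairDiffCount]
  omega

lemma two_mul_sum_eq_sum_symmPairDiffCount_mul [Fintype G] (w : Fin k → G) {f : G → ℝ}
    (hf : ∀ q, f (-q) = f q) :
    2 * ∑ lm : Fin k × Fin k, f (w lm.1 - w lm.2) = ∑ q, (symmPairDiffCount w q : ℝ) * f q := by
  have hsum : ∑ lm : Fin k × Fin k, f (w lm.1 - w lm.2) = ∑ q, pairDiffCount w q • f q := by
    rw [← sum_sub_eq_sum_pairDiffCount_smul]
    exact Finset.sum_congr rfl fun lm _ => by rw [← neg_sub, hf]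
  have hneg : ∑ q, pairDiffCount w q • f q = ∑ q, pairDiffCount w (-q) • f q := by
    rw [← Equiv.sum_comp (Equiv.neg G)]
    simp [hf]
  rw [two_mul, hsum]
  nth_rw 2 [hneg]
  rw [← Finset.sum_add_distrib]
  simp [symmPairDiffCount, add_mul]

end PairDiffCount

section Weyl

open ZMod

variable {n : ℕ} [NeZero n]

lemma diagV_eq_diagonal : diagV n = Matrix.diagonal fun m => stdAddChar m := by
  simp only [diagV, stdAddChar_apply, toCircle_apply]

lemma shiftU_pow_apply (m : ℕ) (i j : ZMod n) :
    (shiftU n ^ m) i j = if i = j + m then 1 else 0 := by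
  induction m generalizing j with
  | zero => simp [Matrix.one_apply]
  | succ m ih =>
    rw [pow_succ, Matrix.mul_apply, Finset.sum_eq_single (j + 1), ih]
    · simp [shiftU, add_assoc, add_comm (1 : ZMod n)]
    · intro l _ hl
      simp [shiftU, hl]
    · simp

lemma Wmat_apply (x y i j : ZMod n) :
    Wmat n x y i j = if i = j + x then stdAddChar (y * j) else 0 := by
  rw [Wmat, diagV_eq_diagonal, Matrix.diagonal_pow, Matrix.mul_diagonal, shiftU_pow_apply,
    natCast_zmod_val, Pi.pow_apply, ← AddChar.map_nsmul_eq_pow, nsmul_eq_mul, natCast_zmod_val]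
  split_ifs <;> simp

lemma Wmat_mul_Wmat (x y a b : ZMod n) :
    Wmat n x y * Wmat n a b = stdAddChar (y * a) • Wmat n (x + a) (y + b) := by
  ext i j
  rw [Matrix.mul_apply, Finset.sum_eq_single (j + a)]
  · have : j + a + x = j + (x + a) := by ring
    simp only [Wmat_apply, Matrix.smul_apply, smul_eq_mul, this, if_true, mul_ite, ite_mul,
      mul_zero, zero_mul]
    refine if_congr Iff.rfl ?_ rfl
    rw [← AddChar.map_add_eq_mul, ← AddChar.map_add_eq_mul]
    ring_nf
  · intro l _ hl
    simp [Wmat_apply, hl]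
  · simp

lemma conjTranspose_Wmat (x y : ZMod n) :
    (Wmat n x y)ᴴ = stdAddChar (x * y) • Wmat n (-x) (-y) := by
  ext i j
  have hij : j = i + x ↔ i = j + -x := by grind
  simp only [Matrix.conjTranspose_apply, Wmat_apply, Matrix.smul_apply, smul_eq_mul,
    apply_ite star, star_zero, hij, mul_ite, mul_zero]
  split_ifs with h
  · rw [RCLike.star_def, ← AddChar.map_neg_eq_conj, ← AddChar.map_add_eq_mul, h]
    ring_nf
  · rfl

lemma trace_Wmat (x y : ZMod n) :
    (Wmat n x y).trace = if x = 0 ∧ y = 0 then (n : ℂ) else 0 := by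
  by_cases hx : x = 0
  · subst hx
    simp only [Matrix.trace, Matrix.diag_apply, Wmat_apply, add_zero, if_true, true_and]
    simpa [mul_comm] using AddChar.sum_mulShift y (isPrimitive_stdAddChar n)
  · have : ∀ j : ZMod n, j ≠ j + x := fun j h => hx (by simpa using h)
    simp [Matrix.trace, Wmat_apply, this, hx]

end Weyl

section WeylCoeff

open ZMod

variable {n : ℕ} [NeZero n]

variable (n) in
def weylCoeff (q : ZMod n × ZMod n) (ρ : Matrix (ZMod n) (ZMod n) ℂ) : ℂ :=
  (Wmat n q.1 q.2 * ρ).trace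

lemma weylCoeff_eq_dft (q : ZMod n × ZMod n) (ρ : Matrix (ZMod n) (ZMod n) ℂ) :
    weylCoeff n q ρ = 𝓕 (fun i => ρ i (i + q.1)) (-q.2) := by
  simp only [weylCoeff, Matrix.trace, Matrix.diag_apply, Matrix.mul_apply, Wmat_apply, ite_mul,
    zero_mul, dft_apply, smul_eq_mul, mul_neg, neg_neg]
  rw [Finset.sum_comm]
  refine Finset.sum_congr rfl fun j _ => ?_
  rw [Finset.sum_ite_eq' Finset.univ (j + q.1), if_pos (Finset.mem_univ _), mul_comm q.2]

lemma sum_norm_sq_weylCoeff (ρ : Matrix (ZMod n) (ZMod n) ℂ) :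
    ∑ q, ‖weylCoeff n q ρ‖ ^ 2 = n * ∑ i, ∑ j, ‖ρ i j‖ ^ 2 := by
  have hrow : ∀ x : ZMod n, ∑ y, ‖weylCoeff n (x, y) ρ‖ ^ 2 = n * ∑ i, ‖ρ i (i + x)‖ ^ 2 := by
    intro x
    simp only [weylCoeff_eq_dft]
    rw [← ZMod.sum_norm_sq_dft]
    exact Equiv.sum_comp (Equiv.neg (ZMod n)) (fun y => ‖𝓕 (fun i => ρ i (i + x)) y‖ ^ 2)
  rw [Fintype.sum_prod_type]
  simp only [hrow, ← Finset.mul_sum]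
  rw [Finset.sum_comm]
  congr 1
  refine Finset.sum_congr rfl fun i _ => ?_
  exact Equiv.sum_comp (Equiv.addLeft i) (fun j => ‖ρ i j‖ ^ 2)

lemma weylCoeff_zero (ρ : Matrix (ZMod n) (ZMod n) ℂ) : weylCoeff n 0 ρ = ρ.trace := by
  simp [weylCoeff, Wmat]

lemma norm_weylCoeff_neg {ρ : Matrix (ZMod n) (ZMod n) ℂ} (hρ : ρ.IsHermitian)
    (q : ZMod n × ZMod n) : ‖weylCoeff n (-q) ρ‖ = ‖weylCoeff n q ρ‖ := by
  have hstar : star (weylCoeff n q ρ) = stdAddChar (q.1 * q.2) * weylCoeff n (-q) ρ := by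
    rw [weylCoeff, ← Matrix.trace_conjTranspose, Matrix.conjTranspose_mul, hρ.eq,
      Matrix.trace_mul_comm, conjTranspose_Wmat, Matrix.smul_mul, Matrix.trace_smul, smul_eq_mul]
    rfl
  rw [← norm_star (weylCoeff n q ρ), hstar, norm_mul, AddChar.norm_apply, one_mul]

lemma weylCoeff_Wmat {q p : ZMod n × ZMod n} (h : q + p ≠ 0) :
    weylCoeff n q (Wmat n p.1 p.2) = 0 := by
  rw [weylCoeff, Wmat_mul_Wmat, Matrix.trace_smul, trace_Wmat, if_neg, smul_zero]
  exact fun h' => h (Prod.ext h'.1 h'.2)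

lemma weylCoeff_conjTranspose_Wmat {q p : ZMod n × ZMod n} (h : q ≠ p) :
    weylCoeff n q (Wmat n p.1 p.2)ᴴ = 0 := by
  rw [weylCoeff, conjTranspose_Wmat, Matrix.mul_smul, Matrix.trace_smul]
  rw [show Wmat n (-p.1) (-p.2) = Wmat n (-p).1 (-p).2 from rfl, ← weylCoeff,
    weylCoeff_Wmat (by rwa [← sub_eq_add_neg, sub_ne_zero]), smul_zero]

end WeylCoeff

lemma exists_isHermitian_traceless_weylCoeff_eq_zero {n : ℕ} [NeZero n]
    {q₀ : ZMod n × ZMod n} (hq₀ : q₀ ≠ 0) :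
    ∃ σ : Matrix (ZMod n) (ZMod n) ℂ, σ.IsHermitian ∧ σ.trace = 0 ∧ σ ≠ 0 ∧
      ∀ q, q ≠ q₀ → q ≠ -q₀ → weylCoeff n q σ = 0 := by
  set W := Wmat n q₀.1 q₀.2
  have hW : W ≠ 0 := fun h => by
    simpa [W, Wmat_apply] using congrFun₂ h (0 + q₀.1) 0
  obtain ⟨c, hc⟩ := Matrix.exists_smul_add_star_smul_conjTranspose_ne_zero hW
  have hsupp : ∀ q, q ≠ q₀ → q ≠ -q₀ → weylCoeff n q (c • W + star c • Wᴴ) = 0 := by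
    intro q h₁ h₂
    rw [weylCoeff, Matrix.mul_add, Matrix.mul_smul, Matrix.mul_smul, Matrix.trace_add,
      Matrix.trace_smul, Matrix.trace_smul, ← weylCoeff, ← weylCoeff,
      weylCoeff_Wmat (by rwa [Ne, add_eq_zero_iff_eq_neg]), weylCoeff_conjTranspose_Wmat h₁,
      smul_zero, smul_zero, add_zero]
  refine ⟨_, W.isHermitian_smul_add_star_smul_conjTranspose c, ?_, hc, hsupp⟩
  rw [← weylCoeff_zero]
  exact hsupp 0 hq₀.symm (by rwa [ne_comm, neg_ne_zero])

section WeylS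

variable {n : ℕ} [NeZero n]

lemma ne_zero_of_mem_weylS {q : ZMod n × ZMod n} (hq : q ∈ weylS n) : q ≠ 0 := by
  rintro rfl
  simp [weylS] at hq

lemma zero_one_mem_weylS (hn : 2 ≤ n) : ((0 : ZMod n), (1 : ZMod n)) ∈ weylS n := by
  have : Fact (1 < n) := ⟨hn⟩
  simp only [weylS, Set.mem_ofPred_eq, ZMod.val_one, ZMod.val_zero, true_and]
  omega

lemma mem_weylS_or_neg_mem_weylS {q : ZMod n × ZMod n} (hq : q ≠ 0) :
    q ∈ weylS n ∨ -q ∈ weylS n := by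
  obtain ⟨a, b⟩ := q
  have ha := ZMod.val_lt a
  have hb := ZMod.val_lt b
  have hab : a ≠ 0 ∨ b ≠ 0 := by
    by_contra! h
    exact hq (Prod.ext h.1 h.2)
  simp only [weylS, Set.mem_ofPred_eq, Prod.fst_neg, Prod.snd_neg, ne_eq,
    ZMod.neg_val, (ZMod.val_injective n).eq_iff.symm, ZMod.val_zero] at hab ⊢
  split_ifs <;> omega

end WeylS

lemma exists_mem_weylS_sSup_eq {n : ℕ} [NeZero n] (hn : 2 ≤ n) (N : ZMod n × ZMod n → ℕ)
    (hN : ∀ q, N (-q) = N q) :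
    ∃ q₀ ∈ weylS n, sSup {x : ℝ | ∃ q ∈ weylS n, x = N q} = N q₀ ∧ ∀ q ≠ 0, N q ≤ N q₀ := by
  set S := {x : ℝ | ∃ q ∈ weylS n, x = N q}
  have hfin : S.Finite := ((weylS n).toFinite.image fun q => (N q : ℝ)).subset
    fun x ⟨q, hq, hx⟩ => ⟨q, hq, hx.symm⟩
  obtain ⟨q₀, hq₀, hsup⟩ : sSup S ∈ S :=
    Set.Nonempty.csSup_mem ⟨_, _, zero_one_mem_weylS hn, rfl⟩ hfin
  have hle : ∀ p ∈ weylS n, N p ≤ N q₀ := fun p hp => by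
    exact_mod_cast hsup ▸ le_csSup hfin.bddAbove ⟨p, hp, rfl⟩
  refine ⟨q₀, hq₀, hsup, fun q hq => ?_⟩
  rcases mem_weylS_or_neg_mem_weylS hq with h | h
  · exact hle q h
  · exact hN q ▸ hle _ h

section WeylComplementary

variable {n : ℕ} [NeZero n] {k : ℕ}

variable (n) in
def weylComplementary (w : Fin k → ZMod n × ZMod n) :
    Matrix (ZMod n) (ZMod n) ℂ →ₗ[ℂ] Matrix (Fin k) (Fin k) ℂ where
  toFun ρ := Matrix.of fun l m =>
    (1 / (k : ℂ)) * (Wmat n (w l).1 (w l).2 * ρ * (Wmat n (w m).1 (w m).2)ᴴ).trace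
  map_add' ρ σ := by
    ext
    simp [Matrix.add_mul, mul_add]
  map_smul' c ρ := by
    ext
    simp only [Matrix.mul_smul, Matrix.smul_mul, Matrix.trace_smul, Matrix.of_apply,
      Matrix.smul_apply, smul_eq_mul, RingHom.id_apply]
    ring

variable (w : Fin k → ZMod n × ZMod n)

lemma norm_weylComplementary_apply (ρ : Matrix (ZMod n) (ZMod n) ℂ) (l m : Fin k) :
    ‖weylComplementary n w ρ l m‖ = ‖weylCoeff n (w l - w m) ρ‖ / k := by
  simp only [weylComplementary, LinearMap.coe_mk, AddHom.coe_mk, Matrix.of_apply]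
  rw [Matrix.trace_mul_cycle, conjTranspose_Wmat, Matrix.smul_mul, Matrix.smul_mul, Wmat_mul_Wmat,
    Matrix.smul_mul, Matrix.trace_smul, Matrix.trace_smul, neg_add_eq_sub, neg_add_eq_sub]
  rw [← Prod.fst_sub, ← Prod.snd_sub, ← weylCoeff]
  simp [div_eq_inv_mul]

lemma isHermitian_weylComplementary {ρ : Matrix (ZMod n) (ZMod n) ℂ} (hρ : ρ.IsHermitian) :
    (weylComplementary n w ρ).IsHermitian := by
  ext l m
  simp only [weylComplementary, LinearMap.coe_mk, AddHom.coe_mk, Matrix.conjTranspose_apply,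
    Matrix.of_apply, star_mul', ← Matrix.trace_conjTranspose, Matrix.conjTranspose_mul,
    Matrix.conjTranspose_conjTranspose, hρ.eq, Matrix.mul_assoc]
  simp

lemma re_trace_mul_self_weylComplementary {ρ : Matrix (ZMod n) (ZMod n) ℂ} (hρ : ρ.IsHermitian) :
    (weylComplementary n w ρ * weylComplementary n w ρ).trace.re =
      (2 * (k : ℝ) ^ 2)⁻¹ * ∑ q, (symmPairDiffCount w q : ℝ) * ‖weylCoeff n q ρ‖ ^ 2 := by
  rw [(isHermitian_weylComplementary w hρ).re_trace_mul_self,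
    ← two_mul_sum_eq_sum_symmPairDiffCount_mul w (f := fun q => ‖weylCoeff n q ρ‖ ^ 2)
      (fun q => by rw [norm_weylCoeff_neg hρ]),
    ← Fintype.sum_prod_type']
  simp only [norm_weylComplementary_apply, div_pow, ← Finset.sum_div]
  ring

lemma re_trace_mul_self_weylComplementary_le {ρ : Matrix (ZMod n) (ZMod n) ℂ}
    (hρ : ρ.IsHermitian) (htr : ρ.trace = 0) {B : ℝ}
    (hB : ∀ q ≠ 0, (symmPairDiffCount w q : ℝ) ≤ B) :
    (weylComplementary n w ρ * weylComplementary n w ρ).trace.re ≤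
      n / (2 * (k : ℝ) ^ 2) * B * (ρ * ρ).trace.re := by
  have hterm : ∀ q, (symmPairDiffCount w q : ℝ) * ‖weylCoeff n q ρ‖ ^ 2 ≤
      B * ‖weylCoeff n q ρ‖ ^ 2 := fun q => by
    rcases eq_or_ne q 0 with rfl | hq
    · simp [weylCoeff_zero, htr]
    · exact mul_le_mul_of_nonneg_right (hB q hq) (sq_nonneg _)
  calc _ ≤ (2 * (k : ℝ) ^ 2)⁻¹ * ∑ q, B * ‖weylCoeff n q ρ‖ ^ 2 := by
        rw [re_trace_mul_self_weylComplementary w hρ]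
        exact mul_le_mul_of_nonneg_left (Finset.sum_le_sum fun q _ => hterm q) (by positivity)
    _ = _ := by
        rw [← Finset.mul_sum, sum_norm_sq_weylCoeff, hρ.re_trace_mul_self]
        ring

lemma re_trace_mul_self_weylComplementary_eq {ρ : Matrix (ZMod n) (ZMod n) ℂ}
    (hρ : ρ.IsHermitian) {q₀ : ZMod n × ZMod n}
    (hsupp : ∀ q, q ≠ q₀ → q ≠ -q₀ → weylCoeff n q ρ = 0) :
    (weylComplementary n w ρ * weylComplementary n w ρ).trace.re =
      n / (2 * (k : ℝ) ^ 2) * symmPairDiffCount w q₀ * (ρ * ρ).trace.re := by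
  have hterm : ∀ q, (symmPairDiffCount w q : ℝ) * ‖weylCoeff n q ρ‖ ^ 2 =
      symmPairDiffCount w q₀ * ‖weylCoeff n q ρ‖ ^ 2 := fun q => by
    by_cases h₁ : q = q₀
    · rw [h₁]
    by_cases h₂ : q = -q₀
    · rw [h₂, symmPairDiffCount_neg]
    simp [hsupp q h₁ h₂]
  rw [re_trace_mul_self_weylComplementary w hρ, Finset.sum_congr rfl fun q _ => hterm q,
    ← Finset.mul_sum, sum_norm_sq_weylCoeff, hρ.re_trace_mul_self]
  ring

end WeylComplementary

lemma opNorm_APhi_weylComplementary {n : ℕ} [NeZero n] {k N : ℕ} (w : Fin k → ZMod n × ZMod n)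
    {M : Fin N → Matrix (ZMod n) (ZMod n) ℂ} (hMherm : ∀ i, (M i).IsHermitian)
    (hMtr : ∀ i, (M i).trace = 0) (hMorth : ∀ i j, (M i * M j).trace = if i = j then 1 else 0)
    (hMspan : ∀ ρ : Matrix (ZMod n) (ZMod n) ℂ, ρ.IsHermitian → ρ.trace = 0 →
      ρ ∈ Submodule.span ℝ (Set.range M))
    {q₀ : ZMod n × ZMod n} (hq₀ : q₀ ≠ 0)
    (hmax : ∀ q ≠ 0, symmPairDiffCount w q ≤ symmPairDiffCount w q₀) :
    opNorm (APhi (weylComplementary n w) M) =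
      n / (2 * (k : ℝ) ^ 2) * symmPairDiffCount w q₀ := by
  refine opNorm_APhi_eq ((weylComplementary n w).restrictScalars ℝ) hMorth (fun x => ?_) ?_
  · have hρ : (∑ i, x i • M i).IsHermitian :=
      isSelfAdjoint_sum _ fun i _ => (hMherm i).smul (IsSelfAdjoint.all (x i))
    rw [LinearMap.coe_restrictScalars, abs_of_nonneg]
    · exact re_trace_mul_self_weylComplementary_le w hρ (by simp [Matrix.trace_sum, hMtr])
        fun q hq => by exact_mod_cast hmax q hq
    · rw [(isHermitian_weylComplementary w hρ).re_trace_mul_self]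
      positivity
  · obtain ⟨σ, hσH, hσtr, hσ0, hσsupp⟩ := exists_isHermitian_traceless_weylCoeff_eq_zero hq₀
    obtain ⟨x, rfl⟩ := (Submodule.mem_span_range_iff_exists_fun ℝ).1 (hMspan σ hσH hσtr)
    exact ⟨x, hσ0, re_trace_mul_self_weylComplementary_eq w hσH hσsupp⟩

theorem weyl_complementary_gamma_general (n k : ℕ) [NeZero n] (hn : 2 ≤ n)
    (w : Fin k → ZMod n × ZMod n) (hw : Function.Injective w)
    (ΨC : Matrix (ZMod n) (ZMod n) ℂ → Matrix (Fin k) (Fin k) ℂ)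
    (hΨC : ∀ ρ l m, ΨC ρ l m =
      (1 / (k : ℂ)) * (Wmat n (w l).1 (w l).2 * ρ * (Wmat n (w m).1 (w m).2)ᴴ).trace)
    (Nab : ZMod n × ZMod n → ℕ)
    (hNab : ∀ q, Nab q =
      (Finset.univ.filter fun lm : Fin k × Fin k =>
        ((w lm.2).1 - (w lm.1).1, (w lm.2).2 - (w lm.1).2) = q).card +
      (Finset.univ.filter fun lm : Fin k × Fin k =>
        ((w lm.2).1 - (w lm.1).1, (w lm.2).2 - (w lm.1).2) = (-q.1, -q.2)).card)
    (M : Fin (n ^ 2 - 1) → Matrix (ZMod n) (ZMod n) ℂ)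
    (hMherm : ∀ i, (M i).IsHermitian) (hMtr : ∀ i, (M i).trace = 0)
    (hMorth : ∀ i j, ((M i) * (M j)).trace = if i = j then 1 else 0)
    (hMspan : ∀ ρ : Matrix (ZMod n) (ZMod n) ℂ, ρ.IsHermitian → ρ.trace = 0 →
      ρ ∈ Submodule.span ℝ (Set.range M)) :
    opNorm (APhi ΨC M) =
      ((n : ℝ) / (2 * (k : ℝ) ^ 2)) * sSup {x : ℝ | ∃ q ∈ weylS n, x = (Nab q : ℝ)} ∧
    gammaPhi n k (opNorm (APhi ΨC M)) =
      1 / k + (((n : ℝ) - 1) / (2 * (k : ℝ) ^ 2)) *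
        sSup {x : ℝ | ∃ q ∈ weylS n, x = (Nab q : ℝ)} := by
  obtain rfl : ΨC = weylComplementary n w :=
    funext fun ρ => Matrix.ext fun l m => hΨC ρ l m
  obtain rfl : Nab = symmPairDiffCount w := funext hNab
  obtain ⟨q₀, hq₀, hsSup, hmax⟩ :=
    exists_mem_weylS_sSup_eq hn (symmPairDiffCount w) (symmPairDiffCount_neg w)
  have hop := opNorm_APhi_weylComplementary w hMherm hMtr hMorth hMspan
    (ne_zero_of_mem_weylS hq₀) hmax
  rw [hsSup, hop]
  exact ⟨rfl, gammaPhi_of_le n k (mod_cast symmPairDiffCount_le hw q₀)⟩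

/-- Theorem: `γ` for complementary channels of discrete Weyl covariant
channels. For `k` distinct pairs `(x_l,y_l)` and the complementary channel
`[Ψ^C(ρ)]_{l,m} = (1/k)·Tr[W_l ρ W_m^*]`:
`‖A_{Ψ^C}‖∞ = (n/(2k²))·max_{(a,b) ∈ S_n} N(a,b)` and consequently
`γ(Ψ^C) = 1/k + ((n−1)/(2k²))·max_{(a,b) ∈ S_n} N(a,b)`. -/
theorem weyl_complementary_gamma (n k : ℕ) [NeZero n] (hn : 2 ≤ n) (hk : 0 < k)
    (w : Fin k → ZMod n × ZMod n) (hw : Function.Injective w)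
    (ΨC : Matrix (ZMod n) (ZMod n) ℂ → Matrix (Fin k) (Fin k) ℂ)
    (hΨC : ∀ ρ l m, ΨC ρ l m =
      (1 / (k : ℂ)) * (Wmat n (w l).1 (w l).2 * ρ * (Wmat n (w m).1 (w m).2)ᴴ).trace)
    (Nab : ZMod n × ZMod n → ℕ)
    (hNab : ∀ q, Nab q =
      (Finset.univ.filter fun lm : Fin k × Fin k =>
        ((w lm.2).1 - (w lm.1).1, (w lm.2).2 - (w lm.1).2) = q).card +
      (Finset.univ.filter fun lm : Fin k × Fin k =>
        ((w lm.2).1 - (w lm.1).1, (w lm.2).2 - (w lm.1).2) = (-q.1, -q.2)).card)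
    (M : Fin (n ^ 2 - 1) → Matrix (ZMod n) (ZMod n) ℂ)
    (hMherm : ∀ i, (M i).IsHermitian) (hMtr : ∀ i, (M i).trace = 0)
    (hMorth : ∀ i j, ((M i) * (M j)).trace = if i = j then 1 else 0)
    (hMspan : ∀ ρ : Matrix (ZMod n) (ZMod n) ℂ, ρ.IsHermitian → ρ.trace = 0 →
      ρ ∈ Submodule.span ℝ (Set.range M)) :
    opNorm (APhi ΨC M) =
      ((n : ℝ) / (2 * (k : ℝ) ^ 2)) * sSup {x : ℝ | ∃ q ∈ weylS n, x = (Nab q : ℝ)} ∧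
    gammaPhi n k (opNorm (APhi ΨC M)) =
      1 / k + (((n : ℝ) - 1) / (2 * (k : ℝ) ^ 2)) *
        sSup {x : ℝ | ∃ q ∈ weylS n, x = (Nab q : ℝ)} :=
  weyl_complementary_gamma_general n k hn w hw ΨC hΨC Nab hNab M hMherm hMtr hMorth hMspan
end
end
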